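/- Let φ be a nontrivial exponential map on an integral domain A over a field k of characteristic p ≥ 0, and let x ∈ A be an element of minimal positive φ-degree (i.e., deg_φ(x) = n > 0 and every element of A with positive φ-degree has φ-degree at least n). Then D^i(x) ∈ A^φ for every i ≥ 1, and moreover D^i(x) = 0 whenever i ≥ 1 is not a power of p. -/

import Mathlib

open Polynomial

/-- An exponential map on a `k`-algebra `A`: a `k`-algebra homomorphism `φ : A → A[U]`
such that evaluating at `U = 0` is the identity and `φ_S φ_U = φ_{S+U}`. -/
def IsExpMap {k A : Type*} [CommSemiring k] [CommSemiring A] [Algebra k A]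
    (φ : A →ₐ[k] A[X]) : Prop :=
  (∀ a : A, (φ a).eval 0 = a) ∧
  (∀ a : A,
    eval₂ ((mapRingHom (C : A →+* A[X])).comp (φ : A →+* A[X])) (C X) (φ a)
      = eval₂ ((C : A[X] →+* A[X][X]).comp (C : A →+* A[X])) (X + C X) (φ a))

/-- The ring of `φ`-invariants `A^φ = {a : A | φ a = a}`. -/
noncomputable def expInv {k A : Type*} [CommSemiring k] [CommSemiring A] [Algebra k A]
    (φ : A →ₐ[k] A[X]) : Subalgebra k A :=
  AlgHom.equalizer φ (IsScalarTower.toAlgHom k A A[X])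

/-- The AK invariant: the intersection of the rings of invariants of all exponential maps. -/
noncomputable def AK (k A : Type*) [CommSemiring k] [CommSemiring A] [Algebra k A] : Subalgebra k A :=
  ⨅ φ ∈ {ψ : A →ₐ[k] A[X] | IsExpMap ψ}, expInv φ

/-
The identity `D^j (D^i a) = (i+j choose j) D^(i+j) a`, read off from `φ_S φ_U = φ_{S+U}`, does
all the work. It gives `deg_φ (D^i x) ≤ deg_φ x - i < deg_φ x` for `i ≥ 1`, so by minimality
`D^i x` has `φ`-degree `0`, i.e. is invariant. Then for `0 < t < i` the same identity yields
`0 = D^(i-t) (D^t x) = (i choose t) D^i x`, and when `i` is not a power of `p` some `i choose t`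
with `0 < t < i` is prime to `p` (Lucas), hence a unit of `k`.
-/

namespace Nat

theorem not_dvd_choose_pow_mul {p : ℕ} (hp : p.Prime) {s : ℕ} (hs : ¬ p ∣ s) (v : ℕ) :
    ¬ p ∣ (p ^ v * s).choose (p ^ v) := by
  have : Fact p.Prime := ⟨hp⟩
  induction v with
  | zero => simpa using hs
  | succ v ih =>
    have hp0 : p ^ (v + 1) % p = 0 := Nat.mod_eq_zero_of_dvd (dvd_pow_self p v.succ_ne_zero)
    have lucas := Choose.choose_modEq_choose_mod_mul_choose_div_nat
      (n := p ^ (v + 1) * s) (k := p ^ (v + 1)) (p := p)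
    rw [Nat.mul_mod, hp0, zero_mul, Nat.zero_mod, Nat.choose_zero_right, one_mul, pow_succ',
      mul_assoc, Nat.mul_div_cancel_left _ hp.pos, Nat.mul_div_cancel_left _ hp.pos] at lucas
    rw [pow_succ', mul_assoc, ← Nat.modEq_zero_iff_dvd]
    exact fun h => ih (Nat.modEq_zero_iff_dvd.mp (lucas.symm.trans h))

theorem exists_not_dvd_choose_of_ne_pow {p i : ℕ} (hp : p.Prime ∨ p = 0) (hi : 1 ≤ i)
    (hnp : ¬ ∃ m : ℕ, i = p ^ m) : ∃ t, 0 < t ∧ t < i ∧ ¬ p ∣ i.choose t := by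
  rcases hp with hp | rfl
  · obtain ⟨v, s, hps, rfl⟩ : ∃ v s : ℕ, ¬ p ∣ s ∧ i = p ^ v * s :=
      ⟨i.factorization p, i / p ^ i.factorization p, Nat.not_dvd_ordCompl hp (by omega),
        (Nat.ordProj_mul_ordCompl_eq_self i p).symm⟩
    have hs : 2 ≤ s := by
      rcases Nat.lt_or_ge s 2 with h | h
      · interval_cases s
        · simp at hi
        · exact absurd ⟨v, mul_one _⟩ hnp
      · exact h
    have hpv : 0 < p ^ v := pow_pos hp.pos v
    exact ⟨p ^ v, hpv, (Nat.lt_mul_iff_one_lt_right hpv).mpr hs, not_dvd_choose_pow_mul hp hps v⟩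
  · have hi1 : i ≠ 1 := fun h => hnp ⟨0, by rw [h, pow_zero]⟩
    exact ⟨1, one_pos, by omega, by simpa using (by omega : i ≠ 0)⟩

end Nat

theorem mem_expInv_iff {k A : Type*} [CommSemiring k] [CommSemiring A] [Algebra k A]
    (φ : A →ₐ[k] A[X]) (a : A) : a ∈ expInv φ ↔ φ a = C a :=
  AlgHom.mem_equalizer _ _ _

namespace IsExpMap

section CommSemiring

variable {k A : Type*} [CommSemiring k] [CommSemiring A] [Algebra k A]
  {φ : A →ₐ[k] A[X]}

theorem coeff_coeff (hφ : IsExpMap φ) (a : A) (i j : ℕ) :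
    (φ ((φ a).coeff i)).coeff j = ((i + j).choose j : A) * (φ a).coeff (i + j) := by
  have E := congrArg (fun q : A[X][X] => (q.coeff j).coeff i) (hφ.2 a)
  simp only [eval₂_eq_sum, Polynomial.sum_def, RingHom.coe_comp, Function.comp_apply,
    coe_mapRingHom, finsetSum_coeff, ← C_pow, coeff_mul_C, coeff_map, coeff_C_mul,
    coeff_X_add_C_pow, coeff_mul_natCast, coeff_X_pow] at E
  rw [Finset.sum_eq_single i, Finset.sum_eq_single (i + j)] at E
  · simpa [mul_comm] using E
  · intro e _ hne
    rcases eq_or_ne (e - j) i with h | h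
    · simp [Nat.choose_eq_zero_of_lt (by omega : e < j)]
    · rw [if_neg (Ne.symm h), zero_mul, mul_zero]
  · intro h
    simp [Polynomial.notMem_support_iff.mp h]
  · intro e _ hne
    rw [if_neg (Ne.symm hne), mul_zero]
  · intro h
    simp [Polynomial.notMem_support_iff.mp h]

theorem natDegree_coeff_le (hφ : IsExpMap φ) (a : A) (i : ℕ) :
    (φ ((φ a).coeff i)).natDegree ≤ (φ a).natDegree - i := by
  rw [natDegree_le_iff_coeff_eq_zero]
  intro j hj
  rw [hφ.coeff_coeff, coeff_eq_zero_of_natDegree_lt (by omega), mul_zero]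

theorem mem_expInv_of_natDegree_eq_zero (hφ : IsExpMap φ) {a : A}
    (ha : (φ a).natDegree = 0) : a ∈ expInv φ := by
  rw [mem_expInv_iff, eq_C_of_natDegree_eq_zero ha, coeff_zero_eq_eval_zero, hφ.1]

theorem coeff_mem_expInv_of_minimal (hφ : IsExpMap φ) {x : A}
    (hmin : ∀ a : A, 0 < (φ a).natDegree → (φ x).natDegree ≤ (φ a).natDegree)
    {i : ℕ} (hi : 1 ≤ i) : (φ x).coeff i ∈ expInv φ := by
  refine hφ.mem_expInv_of_natDegree_eq_zero (Nat.eq_zero_of_not_pos fun hpos => ?_)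
  have := hφ.natDegree_coeff_le x i
  have := hmin _ hpos
  omega

end CommSemiring

theorem coeff_eq_zero_of_choose_ne_zero {k A : Type*} [Field k] [CommSemiring A]
    [Algebra k A] {φ : A →ₐ[k] A[X]} (hφ : IsExpMap φ) {a : A} {t i : ℕ}
    (hti : t < i) (ht : (φ a).coeff t ∈ expInv φ) (hchoose : (i.choose t : k) ≠ 0) :
    (φ a).coeff i = 0 := by
  have hunit : IsUnit (i.choose t : A) := by
    simpa using (IsUnit.mk0 _ hchoose).map (algebraMap k A)
  have h := hφ.coeff_coeff a t (i - t)
  rw [(mem_expInv_iff φ _).mp ht, coeff_C, if_neg (by omega), Nat.add_sub_cancel' hti.le,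
    Nat.choose_symm hti.le] at h
  exact (hunit.mul_right_eq_zero).mp h.symm

end IsExpMap

theorem statement6_general {k A : Type*} [Field k] [CommRing A] [Algebra k A]
    (p : ℕ) [CharP k p]
    (φ : A →ₐ[k] A[X]) (hφ : IsExpMap φ)
    (x : A) (n : ℕ) (hxn : (φ x).natDegree = n)
    (hmin : ∀ a : A, 0 < (φ a).natDegree → n ≤ (φ a).natDegree) :
    (∀ i : ℕ, 1 ≤ i → (φ x).coeff i ∈ expInv φ) ∧
    (∀ i : ℕ, 1 ≤ i → (¬ ∃ m : ℕ, i = p ^ m) → (φ x).coeff i = 0) := by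
  subst hxn
  have hinv : ∀ i : ℕ, 1 ≤ i → (φ x).coeff i ∈ expInv φ :=
    fun i hi => hφ.coeff_mem_expInv_of_minimal hmin hi
  refine ⟨hinv, fun i hi hnp => ?_⟩
  obtain ⟨t, ht0, hti, hdvd⟩ :=
    Nat.exists_not_dvd_choose_of_ne_pow (CharP.char_is_prime_or_zero k p) hi hnp
  exact hφ.coeff_eq_zero_of_choose_ne_zero hti (hinv t ht0)
    (by rwa [Ne, CharP.cast_eq_zero_iff k p])

/-- Let `φ` be a nontrivial exponential map on a domain `A` over a field `k`
of characteristic `p ≥ 0`, and let `x` have minimal positive `φ`-degree `n`. Then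
`D^i(x) ∈ A^φ` for all `i ≥ 1`, and `D^i(x) = 0` whenever `i ≥ 1` is not a power of `p`
(where for `p = 0`, the powers of `p` occurring are exactly `0^0 = 1`). -/
theorem statement6 {k A : Type*} [Field k] [CommRing A] [IsDomain A] [Algebra k A]
    (p : ℕ) [CharP k p]
    (φ : A →ₐ[k] A[X]) (hφ : IsExpMap φ)
    (hnt : φ ≠ IsScalarTower.toAlgHom k A A[X])
    (x : A) (n : ℕ) (hn : 0 < n) (hxn : (φ x).natDegree = n)
    (hmin : ∀ a : A, 0 < (φ a).natDegree → n ≤ (φ a).natDegree) :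
    (∀ i : ℕ, 1 ≤ i → (φ x).coeff i ∈ expInv φ) ∧
    (∀ i : ℕ, 1 ≤ i → (¬ ∃ m : ℕ, i = p ^ m) → (φ x).coeff i = 0) :=
  statement6_general p φ hφ x n hxn hmin
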